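/- A function u : ℝ → ℝ that is both convex and semiconcave with constant C (i.e., u(x+h) - 2u(x) + u(x-h) ≤ C h² for all x, h) is differentiable everywhere, and its derivative is Lipschitz with constant C; in particular u ∈ C^{1,1}(ℝ). -/

import Mathlib

open Set Filter Topology

def SemiconcaveWith (C : ℝ) (f : ℝ → ℝ) : Prop :=
  ∀ x h : ℝ, f (x + h) - 2 * f x + f (x - h) ≤ C * h ^ 2

namespace SemiconcaveWith

variable {C : ℝ} {f : ℝ → ℝ}

lemma slope_le_slope_add (hf : SemiconcaveWith C f) (x : ℝ) {t : ℝ} (ht : 0 < t) :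
    slope f x (x + t) ≤ slope f (x - t) x + C * t := by
  have hsd := hf x t
  rw [slope_def_field, slope_def_field, add_sub_cancel_left, sub_sub_cancel,
    div_le_iff₀ ht, add_mul, div_mul_cancel₀ _ ht.ne']
  nlinarith

lemma slope_le_slope_add_mul (hf : SemiconcaveWith C f) (a : ℝ) {h : ℝ} (hh : 0 < h) (n : ℕ) :
    slope f (a + n * h) (a + (n + 1) * h) ≤ slope f a (a + h) + C * n * h := by
  induction n with
  | zero => simp
  | succ k ih =>
    have hstep := hf.slope_le_slope_add (a + (k + 1) * h) hh
    rw [show a + (k + 1) * h - h = a + k * h by ring] at hstep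
    push_cast
    rw [show a + (k + 1 + 1) * h = a + (k + 1) * h + h by ring]
    linarith

end SemiconcaveWith

namespace ConvexOn

variable {C : ℝ} {f : ℝ → ℝ}

/-- The right derivative exceeds the left one by at most `C t` for every `t > 0`. -/
lemma hasDerivAt_rightDeriv_of_semiconcaveWith (hconv : ConvexOn ℝ univ f)
    (hsc : SemiconcaveWith C f) (x : ℝ) : HasDerivAt f (derivWithin f (Ioi x) x) x := by
  have hx : x ∈ interior univ := by simp
  have hleft_le := hconv.leftDeriv_le_rightDeriv_of_mem_interior hx
  have hright_le : ∀ t > 0, derivWithin f (Ioi x) x ≤ derivWithin f (Iio x) x + C * t :=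
    fun t ht => calc
      derivWithin f (Ioi x) x ≤ slope f x (x + t) :=
        hconv.rightDeriv_le_slope_of_mem_interior hx (mem_univ _) (by linarith)
      _ ≤ slope f (x - t) x + C * t := hsc.slope_le_slope_add x ht
      _ ≤ derivWithin f (Iio x) x + C * t := by
        gcongr
        exact hconv.slope_le_leftDeriv_of_mem_interior (mem_univ _) hx (by linarith)
  have hlim : Tendsto (fun t => derivWithin f (Iio x) x + C * t) (𝓝[>] 0)
      (𝓝 (derivWithin f (Iio x) x)) :=
    tendsto_nhdsWithin_of_tendsto_nhds <|
      (by fun_prop : Continuous fun t : ℝ => derivWithin f (Iio x) x + C * t).tendsto' 0 _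
        (by simp)
  have hsymm : derivWithin f (Iio x) x = derivWithin f (Ioi x) x :=
    hleft_le.antisymm (ge_of_tendsto hlim (eventually_nhdsWithin_of_forall hright_le))
  have hleft := hconv.hasDerivWithinAt_leftDeriv_of_mem_interior hx
  rw [hsymm] at hleft
  have hboth := hleft.Iic_of_Iio.union
    (hconv.hasDerivWithinAt_rightDeriv_of_mem_interior hx).Ici_of_Ioi
  rwa [Iic_union_Ici, hasDerivWithinAt_univ] at hboth

lemma differentiable_of_semiconcaveWith (hconv : ConvexOn ℝ univ f)
    (hsc : SemiconcaveWith C f) : Differentiable ℝ f :=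
  fun x => (hconv.hasDerivAt_rightDeriv_of_semiconcaveWith hsc x).differentiableAt

/-- Telescoping the second-difference bound over the `n + 1` steps of length `(y - x) / (n + 1)`
from `x` to `y` gives the bound up to the error `C (y - x) / (n + 1)`, which vanishes as `n → ∞`. -/
lemma deriv_le_deriv_add_of_semiconcaveWith (hconv : ConvexOn ℝ univ f)
    (hsc : SemiconcaveWith C f) {x y : ℝ} (hxy : x < y) :
    deriv f y ≤ deriv f x + C * (y - x) := by
  have hdiff := hconv.differentiable_of_semiconcaveWith hsc
  have hbound : ∀ n : ℕ,
      deriv f y ≤ deriv f x + C * (y - x) + C * (y - x) * (1 / ((n : ℝ) + 1)) := by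
    intro n
    set h := (y - x) / ((n : ℝ) + 1)
    have hh : 0 < h := div_pos (by linarith) (by positivity)
    have hy : x + ((n : ℝ) + 1) * h = y := by
      simp only [h]; field_simp; ring
    calc deriv f y ≤ slope f y (y + h) :=
          hconv.deriv_le_slope (mem_univ _) (mem_univ _) (by linarith) (hdiff y)
      _ ≤ slope f x (x + h) + C * ((n : ℝ) + 1) * h := by
          have := hsc.slope_le_slope_add_mul x hh (n + 1)
          rwa [Nat.cast_succ, hy, add_mul, one_mul, ← add_assoc, hy] at this
      _ ≤ slope f (x - h) x + C * h + C * ((n : ℝ) + 1) * h := by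
          gcongr; exact hsc.slope_le_slope_add x hh
      _ ≤ deriv f x + C * h + C * ((n : ℝ) + 1) * h := by
          gcongr; exact hconv.slope_le_deriv (mem_univ _) (mem_univ _) (by linarith) (hdiff x)
      _ = deriv f x + C * (y - x) + C * (y - x) * (1 / ((n : ℝ) + 1)) := by
          simp only [h]; field_simp; ring
  have hlim : Tendsto (fun n : ℕ => deriv f x + C * (y - x) + C * (y - x) * (1 / ((n : ℝ) + 1)))
      atTop (𝓝 (deriv f x + C * (y - x))) := by
    simpa using tendsto_const_nhds.add
      (tendsto_const_nhds.mul (tendsto_one_div_add_atTop_nhds_zero_nat (𝕜 := ℝ)))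
  exact ge_of_tendsto' hlim hbound

end ConvexOn

theorem convex_semiconcave_is_C11_general
    (u : ℝ → ℝ) (C : ℝ)
    (hconv : ConvexOn ℝ univ u)
    (hsc : ∀ x h : ℝ, u (x + h) - 2 * u x + u (x - h) ≤ C * h ^ 2) :
    Differentiable ℝ u ∧ ∀ x y : ℝ, |deriv u x - deriv u y| ≤ C * |x - y| := by
  have hsc : SemiconcaveWith C u := hsc
  have hdiff := hconv.differentiable_of_semiconcaveWith hsc
  refine ⟨hdiff, fun x y => ?_⟩
  have hmono := hconv.monotoneOn_deriv fun z _ => hdiff z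
  wlog hxy : x ≤ y generalizing x y
  · rw [abs_sub_comm, abs_sub_comm x]; exact this y x (le_of_not_ge hxy)
  rcases hxy.eq_or_lt with rfl | hlt
  · simp
  rw [abs_sub_comm, abs_of_nonneg (sub_nonneg.mpr (hmono (mem_univ _) (mem_univ _) hxy)),
    abs_sub_comm, abs_of_pos (sub_pos.mpr hlt)]
  linarith [hconv.deriv_le_deriv_add_of_semiconcaveWith hsc hlt]

theorem convex_semiconcave_is_C11
    (u : ℝ → ℝ) (C : ℝ) (hC : 0 ≤ C)
    (hconv : ConvexOn ℝ univ u)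
    (hsc : ∀ x h : ℝ, u (x + h) - 2 * u x + u (x - h) ≤ C * h ^ 2) :
    Differentiable ℝ u ∧ ∀ x y : ℝ, |deriv u x - deriv u y| ≤ C * |x - y| :=
  convex_semiconcave_is_C11_general u C hconv hsc
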